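/- Operator product formula: H_n(x,s,q) = (x − q^{n−1} s D_q)(x − q^{n−2} s D_q)···(x − s D_q) applied to 1, where D_q is the q-derivative operator and x denotes multiplication by x. -/

import Mathlib

/-!
Both sides start at `1` and obey `H_{n+1} = x H_n - q^n s D_q H_n`: the product side by
construction, the q-Hermite side by comparing coefficients of `x^m`. There the recurrence is the
q-Pascal rule `[n+1, K] = [n, K] + q^(n+1-K) [n, K-1]` combined with the absorption identity
`[n, K+1] [K+1] = [n, K] [n-K]`; for the constant term of `H_{2j+2}` only absorption is needed.
-/

noncomputable section

/-- The q-integer `[n]_q = (1 - q^n)/(1 - q)`. -/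
def qnat (q : ℝ) (n : ℕ) : ℝ := (1 - q ^ n) / (1 - q)

/-- The q-factorial `[n]_q!`. -/
def qfac (q : ℝ) (n : ℕ) : ℝ := ∏ j ∈ Finset.range n, qnat q (j + 1)

/-- The Gaussian binomial coefficient. -/
def qbinom (q : ℝ) (n k : ℕ) : ℝ := qfac q n / (qfac q k * qfac q (n - k))

/-- The odd q-double factorial `[2k-1]_q!! = [1]_q [3]_q ⋯ [2k-1]_q`. -/
def qdf (q : ℝ) (k : ℕ) : ℝ := ∏ i ∈ Finset.range k, qnat q (2 * i + 1)

/-- The bivariate q-Hermite polynomial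
`H n (x,s,q) = ∑_{2k ≤ n} (-s)^k q^(k²) qbinom(n,2k) [2k-1]_q!! x^(n-2k)`. -/
def qHermite (q s : ℝ) (n : ℕ) (x : ℝ) : ℝ :=
  ∑ k ∈ Finset.range (n / 2 + 1),
    (-s) ^ k * q ^ (k ^ 2) * qbinom q n (2 * k) * qdf q k * x ^ (n - 2 * k)

open Polynomial

/-- The q-Hermite polynomial as an element of `ℝ[X]` (variable `x`). -/
def qHermitePoly (q s : ℝ) (n : ℕ) : Polynomial ℝ :=
  ∑ k ∈ Finset.range (n / 2 + 1),
    C ((-s) ^ k * q ^ (k ^ 2) * qbinom q n (2 * k) * qdf q k) * X ^ (n - 2 * k)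

/-- The q-derivative on polynomials, determined by `D_q x^m = [m]_q x^(m-1)`. -/
def qDeriv (q : ℝ) (p : Polynomial ℝ) : Polynomial ℝ :=
  p.sum fun m a => C (a * qnat q m) * X ^ (m - 1)

/-- Apply the operators `(x - q^i s D_q)` for the exponents `i` in the list `l`
(rightmost factor = last element of `l` acts first) to the constant polynomial 1. -/
def qOpProd (q s : ℝ) (l : List ℕ) : Polynomial ℝ :=
  l.foldr (fun i p => X * p - C (q ^ i * s) * qDeriv q p) 1

end

open Polynomial

section

variable {q : ℝ}

lemma qnat_succ_ne_zero (hq : 0 ≤ q) (hq1 : q ≠ 1) (m : ℕ) : qnat q (m + 1) ≠ 0 :=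
  div_ne_zero (sub_ne_zero.2 fun h => hq1 ((pow_eq_one_iff_of_nonneg hq m.succ_ne_zero).1 h.symm))
    (sub_ne_zero.2 (Ne.symm hq1))

lemma qnat_add (a b : ℕ) : qnat q (a + b) = qnat q a + q ^ a * qnat q b := by
  simp only [qnat, pow_add]
  ring

lemma qfac_zero : qfac q 0 = 1 :=
  Finset.prod_range_zero _

lemma qfac_succ (n : ℕ) : qfac q (n + 1) = qfac q n * qnat q (n + 1) :=
  Finset.prod_range_succ _ _

lemma qdf_succ (k : ℕ) : qdf q (k + 1) = qdf q k * qnat q (2 * k + 1) :=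
  Finset.prod_range_succ _ _

lemma qfac_ne_zero (hq : ∀ m, qnat q (m + 1) ≠ 0) (n : ℕ) : qfac q n ≠ 0 :=
  Finset.prod_ne_zero_iff.2 fun m _ => hq m

lemma qbinom_zero_right (hq : ∀ m, qnat q (m + 1) ≠ 0) (n : ℕ) : qbinom q n 0 = 1 := by
  rw [qbinom, Nat.sub_zero, qfac_zero, one_mul, div_self (qfac_ne_zero hq n)]

lemma qbinom_self (hq : ∀ m, qnat q (m + 1) ≠ 0) (n : ℕ) : qbinom q n n = 1 := by
  rw [qbinom, Nat.sub_self, qfac_zero, mul_one, div_self (qfac_ne_zero hq n)]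

lemma qbinom_succ_mul_qnat (hq : ∀ m, qnat q (m + 1) ≠ 0) (k r : ℕ) :
    qbinom q (k + r + 1) (k + 1) * qnat q (k + 1) = qbinom q (k + r + 1) k * qnat q (r + 1) := by
  have hk := qfac_ne_zero hq k
  have hr := qfac_ne_zero hq r
  simp only [qbinom, show k + r + 1 - (k + 1) = r by omega, show k + r + 1 - k = r + 1 by omega,
    qfac_succ]
  field_simp [hq k, hq r]

lemma qbinom_succ_succ (hq : ∀ m, qnat q (m + 1) ≠ 0) (k r : ℕ) :
    qbinom q (k + r + 2) (k + 1)
      = qbinom q (k + r + 1) (k + 1) + q ^ (r + 1) * qbinom q (k + r + 1) k := by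
  have hk := qfac_ne_zero hq k
  have hr := qfac_ne_zero hq r
  have hsplit : qnat q (k + r + 2) = qnat q (r + 1) + q ^ (r + 1) * qnat q (k + 1) := by
    rw [← qnat_add, show r + 1 + (k + 1) = k + r + 2 by ring]
  simp only [qbinom, show k + r + 2 - (k + 1) = r + 1 by omega,
    show k + r + 1 - (k + 1) = r by omega, show k + r + 1 - k = r + 1 by omega,
    show k + r + 2 = (k + r + 1) + 1 by omega, qfac_succ, hsplit]
  field_simp [hq k, hq r]

noncomputable def qHermiteCoeff (q s : ℝ) (n k : ℕ) : ℝ :=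
  (-s) ^ k * q ^ (k ^ 2) * qbinom q n (2 * k) * qdf q k

lemma qHermiteCoeff_zero_right (hq : ∀ m, qnat q (m + 1) ≠ 0) (s : ℝ) (n : ℕ) :
    qHermiteCoeff q s n 0 = 1 := by
  simp [qHermiteCoeff, qbinom_zero_right hq, qdf]

lemma qHermiteCoeff_succ (hq : ∀ m, qnat q (m + 1) ≠ 0) (s : ℝ) (a j : ℕ) :
    qHermiteCoeff q s (a + 2 * j + 3) (j + 1) = qHermiteCoeff q s (a + 2 * j + 2) (j + 1)
      - q ^ (a + 2 * j + 2) * s * qnat q (a + 2) * qHermiteCoeff q s (a + 2 * j + 2) j := by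
  have hpascal := qbinom_succ_succ hq (2 * j + 1) a
  have habsorb := qbinom_succ_mul_qnat hq (2 * j) (a + 1)
  rw [show 2 * j + 1 + a + 2 = a + 2 * j + 3 by ring,
    show 2 * j + 1 + a + 1 = a + 2 * j + 2 by ring] at hpascal
  rw [show 2 * j + (a + 1) + 1 = a + 2 * j + 2 by ring] at habsorb
  simp only [qHermiteCoeff, show 2 * (j + 1) = 2 * j + 1 + 1 by ring, qdf_succ]
  linear_combination ((-s) ^ (j + 1) * q ^ ((j + 1) ^ 2) * qdf q j * qnat q (2 * j + 1)) * hpascal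
    + ((-s) ^ (j + 1) * q ^ ((j + 1) ^ 2) * q ^ (a + 1) * qdf q j) * habsorb

lemma qHermiteCoeff_two_mul_add_two (hq : ∀ m, qnat q (m + 1) ≠ 0) (s : ℝ) (j : ℕ) :
    qHermiteCoeff q s (2 * j + 2) (j + 1)
      = -(q ^ (2 * j + 1) * s * qnat q 1 * qHermiteCoeff q s (2 * j + 1) j) := by
  have habsorb := qbinom_succ_mul_qnat hq (2 * j) 0
  rw [show 2 * j + 0 + 1 = 2 * j + 1 by ring, qbinom_self hq] at habsorb
  simp only [qHermiteCoeff, show 2 * (j + 1) = 2 * j + 2 by ring, qbinom_self hq, qdf_succ]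
  linear_combination ((-s) ^ (j + 1) * q ^ ((j + 1) ^ 2) * qdf q j) * habsorb

lemma qDeriv_add (p r : ℝ[X]) : qDeriv q (p + r) = qDeriv q p + qDeriv q r :=
  sum_add_index p r _ (fun _ => by simp) fun _ _ _ => by simp [add_mul]

lemma qDeriv_monomial (j : ℕ) (a : ℝ) :
    qDeriv q (monomial j a) = C (a * qnat q j) * X ^ (j - 1) :=
  sum_monomial_index _ _ (by simp)

lemma coeff_qDeriv (p : ℝ[X]) (m : ℕ) :
    (qDeriv q p).coeff m = qnat q (m + 1) * p.coeff (m + 1) := by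
  induction p using Polynomial.induction_on' with
  | add p r hp hr => rw [qDeriv_add, coeff_add, hp, hr, coeff_add, mul_add]
  | monomial j a =>
    rw [qDeriv_monomial, coeff_C_mul_X_pow, coeff_monomial]
    rcases j with _ | j
    · simp [qnat]
    · by_cases h : m = j
      · simp [h, mul_comm]
      · simp [h, Ne.symm h]

lemma qHermitePoly_eq_sum (s : ℝ) (n : ℕ) :
    qHermitePoly q s n
      = ∑ k ∈ Finset.range (n / 2 + 1), C (qHermiteCoeff q s n k) * X ^ (n - 2 * k) :=
  rfl

lemma coeff_qHermitePoly (s : ℝ) {n m k : ℕ} (h : m + 2 * k = n) :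
    (qHermitePoly q s n).coeff m = qHermiteCoeff q s n k := by
  rw [qHermitePoly_eq_sum, finsetSum_coeff, Finset.sum_eq_single k]
  · rw [coeff_C_mul_X_pow, if_pos (by omega)]
  · intro j hj hjk
    have := Finset.mem_range.1 hj
    rw [coeff_C_mul_X_pow, if_neg (by omega)]
  · intro hk
    exact absurd (Finset.mem_range.2 (by omega)) hk

lemma coeff_qHermitePoly_eq_zero (s : ℝ) {n m : ℕ} (h : ∀ k, m + 2 * k ≠ n) :
    (qHermitePoly q s n).coeff m = 0 := by
  rw [qHermitePoly_eq_sum, finsetSum_coeff]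
  refine Finset.sum_eq_zero fun k hk => ?_
  rw [coeff_C_mul_X_pow, if_neg]
  have := Finset.mem_range.1 hk
  exact fun hm => h k (by omega)

lemma qHermitePoly_zero (hq : ∀ m, qnat q (m + 1) ≠ 0) (s : ℝ) : qHermitePoly q s 0 = 1 := by
  simp [qHermitePoly_eq_sum, qHermiteCoeff_zero_right hq]

lemma qHermitePoly_succ (hq : ∀ m, qnat q (m + 1) ≠ 0) (s : ℝ) (n : ℕ) :
    qHermitePoly q s (n + 1)
      = X * qHermitePoly q s n - C (q ^ n * s) * qDeriv q (qHermitePoly q s n) := by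
  ext m
  rw [coeff_sub, coeff_C_mul, coeff_qDeriv]
  by_cases hm : ∃ k, m + 2 * k = n + 1
  · obtain ⟨k, hk⟩ := hm
    rcases k with _ | j
    · obtain rfl : m = n + 1 := by omega
      rw [coeff_X_mul, coeff_qHermitePoly s (n := n + 1) (k := 0) rfl,
        coeff_qHermitePoly s (n := n) (k := 0) rfl,
        coeff_qHermitePoly_eq_zero s (m := n + 1 + 1) (by omega), qHermiteCoeff_zero_right hq,
        qHermiteCoeff_zero_right hq]
      ring
    · rcases m with _ | a
      · obtain rfl : n = 2 * j + 1 := by omega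
        rw [coeff_X_mul_zero, coeff_qHermitePoly s (k := j + 1) (by ring),
          coeff_qHermitePoly s (k := j) (by ring), qHermiteCoeff_two_mul_add_two hq]
        ring
      · obtain rfl : n = a + 2 * j + 2 := by omega
        rw [coeff_X_mul, coeff_qHermitePoly s (k := j + 1) (by ring),
          coeff_qHermitePoly s (k := j + 1) (by ring), coeff_qHermitePoly s (k := j) (by ring),
          qHermiteCoeff_succ hq]
        ring
  · simp only [not_exists] at hm
    have hX : (X * qHermitePoly q s n).coeff m = 0 := by
      rcases m with _ | a
      · exact coeff_X_mul_zero _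
      · rw [coeff_X_mul, coeff_qHermitePoly_eq_zero s fun k hk => hm k (by omega)]
    rw [coeff_qHermitePoly_eq_zero s hm, hX,
      coeff_qHermitePoly_eq_zero s fun k hk => hm (k + 1) (by omega)]
    ring

end

theorem qHermite_operator_product (q : ℝ) (hq : 0 < q) (hq1 : q < 1) (s : ℝ) (n : ℕ) :
    qHermitePoly q s n = qOpProd q s (List.range n).reverse := by
  have hqnat : ∀ m, qnat q (m + 1) ≠ 0 := qnat_succ_ne_zero hq.le hq1.ne
  induction n with
  | zero => exact qHermitePoly_zero hqnat s
  | succ n ih =>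
    rw [qHermitePoly_succ hqnat, ih, List.range_succ, List.reverse_append]
    rfl
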